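/- Let k = 3^α·5^β with α, β ≥ 0 and α + β ≥ 1. Assume s((ℤ/3ℤ)^3) ≤ 3·2·C(6,3)+1 and s((ℤ/5ℤ)^3) ≤ 5·4·C(6,3)+1 (which follow from Property D for these groups), and the subgroup inequality s(G) ≤ exp(G/H)(s(H)-1)+s(G/H). Then s((ℤ/kℤ)^3) ≤ 300k - 299. -/

import Mathlib

/-!
The bound `s((ℤ/nℤ)^d) ≤ c(n - 1) + 1` is multiplicative in `n`. Indeed, multiplication by
`p` followed by reduction mod `p` is a short exact sequence `(ℤ/mℤ)^d → (ℤ/pmℤ)^d → (ℤ/pℤ)^d`,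
and the subgroup inequality for it gives `s((ℤ/pmℤ)^d) ≤ p·c(m - 1) + c(p - 1) + 1 = c(pm - 1) + 1`.
With `c = 300` the bound holds for `n = 3` and `n = 5` by hypothesis and trivially for `n = 1`.
-/

/-- The Erdős–Ginzburg–Ziv constant of a finite abelian group `A`. -/
noncomputable def EGZ (A : Type*) [AddCommMonoid A] : ℕ :=
  sInf {ℓ | ∀ S : Multiset A, ℓ ≤ Multiset.card S →
    ∃ T ≤ S, Multiset.card T = AddMonoid.exponent A ∧ T.sum = 0}

open Function

theorem exists_zero_sum_of_addEquiv {A B : Type*} [AddCommMonoid A] [AddCommMonoid B]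
    (e : A ≃+ B) {ℓ : ℕ} (h : ∀ S : Multiset A, ℓ ≤ Multiset.card S →
      ∃ T ≤ S, Multiset.card T = AddMonoid.exponent A ∧ T.sum = 0)
    (S : Multiset B) (hS : ℓ ≤ Multiset.card S) :
    ∃ T ≤ S, Multiset.card T = AddMonoid.exponent B ∧ T.sum = 0 := by
  obtain ⟨T, hTS, hTcard, hTsum⟩ := h (S.map e.symm) (by rwa [Multiset.card_map])
  refine ⟨T.map e, ?_, ?_, ?_⟩
  · simpa [Multiset.map_map, comp_def] using Multiset.map_le_map (f := e) hTS
  · rw [Multiset.card_map, hTcard, AddMonoid.exponent_eq_of_addEquiv e]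
  · rw [← map_multiset_sum, hTsum, map_zero]

theorem EGZ_congr {A B : Type*} [AddCommMonoid A] [AddCommMonoid B] (e : A ≃+ B) :
    EGZ A = EGZ B := by
  unfold EGZ
  congr 1
  ext ℓ
  exact ⟨exists_zero_sum_of_addEquiv e, exists_zero_sum_of_addEquiv e.symm⟩

theorem EGZ_le_one_of_subsingleton {A : Type*} [AddCommMonoid A] [Subsingleton A] :
    EGZ A ≤ 1 := by
  refine Nat.sInf_le fun S hS => ?_
  obtain ⟨a, ha⟩ := Multiset.card_pos_iff_exists_mem.mp hS
  refine ⟨{a}, Multiset.singleton_le.mpr ha, ?_, Subsingleton.elim _ _⟩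
  rw [Multiset.card_singleton, AddMonoid.exp_eq_one_of_subsingleton]

def EGZSubgroupInequality : Prop :=
  ∀ (G : Type) (_ : AddCommGroup G) (_ : Fintype G) (H : AddSubgroup G),
    AddMonoid.exponent G = AddMonoid.exponent H * AddMonoid.exponent (G ⧸ H) →
    EGZ G ≤ AddMonoid.exponent (G ⧸ H) * (EGZ H - 1) + EGZ (G ⧸ H)

theorem EGZ_le_of_exact (hsub : EGZSubgroupInequality) {K G Q : Type} [AddCommGroup K]
    [AddCommGroup G] [Fintype G] [AddCommGroup Q] {ψ : K →+ G} {f : G →+ Q}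
    (hψ : Injective ψ) (hf : Surjective f) (hexact : Exact ψ f)
    (hexp : AddMonoid.exponent G = AddMonoid.exponent K * AddMonoid.exponent Q) :
    EGZ G ≤ AddMonoid.exponent Q * (EGZ K - 1) + EGZ Q := by
  let eK : K ≃+ f.ker := (AddMonoidHom.ofInjective hψ).trans
    (AddEquiv.addSubgroupCongr hexact.addMonoidHom_ker_eq.symm)
  let eQ : G ⧸ f.ker ≃+ Q := QuotientAddGroup.quotientKerEquivOfSurjective f hf
  have := hsub G inferInstance inferInstance f.ker <| by
    rwa [← AddMonoid.exponent_eq_of_addEquiv eK, AddMonoid.exponent_eq_of_addEquiv eQ]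
  rwa [AddMonoid.exponent_eq_of_addEquiv eQ, ← EGZ_congr eK, EGZ_congr eQ] at this

theorem AddMonoid.exponent_pi_const {ι M : Type*} [Fintype ι] [Nonempty ι] [AddMonoid M] :
    AddMonoid.exponent (ι → M) = AddMonoid.exponent M := by
  rw [AddMonoid.exponent_pi]
  exact Nat.dvd_antisymm (Finset.lcm_dvd fun _ _ => dvd_rfl)
    (Finset.dvd_lcm (Finset.mem_univ (Classical.arbitrary ι)))

theorem Function.Exact.comp_left {ι M N P : Type*} [Zero P] {f : M → N} {g : N → P}
    (h : Exact f g) : Exact (fun x : ι → M => f ∘ x) (fun y : ι → N => g ∘ y) := by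
  intro y
  simp only [funext_iff, comp_apply, Pi.zero_apply, h _, Set.mem_range]
  exact Classical.skolem

namespace ZMod

variable (p m : ℕ)

def mulLeftHom : ZMod m →+ ZMod (p * m) :=
  ZMod.lift m ⟨(Int.castAddHom (ZMod (p * m))).comp (AddMonoidHom.mulLeft (p : ℤ)), by
    show ((p * m : ℤ) : ZMod (p * m)) = 0
    exact_mod_cast natCast_self (p * m)⟩

theorem mulLeftHom_intCast (x : ℤ) : mulLeftHom p m x = ((p * x : ℤ) : ZMod (p * m)) :=
  lift_coe _ _ x

theorem mulLeftHom_injective [NeZero p] : Injective (mulLeftHom p m) := by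
  refine (lift_injective m).mpr fun x hx => ?_
  change ((p * x : ℤ) : ZMod (p * m)) = 0 at hx
  rw [intCast_zmod_eq_zero_iff_dvd] at hx ⊢
  push_cast at hx
  exact (mul_dvd_mul_iff_left (by exact_mod_cast NeZero.ne p)).mp hx

theorem exact_mulLeftHom_castHom :
    Exact (mulLeftHom p m) (castHom (dvd_mul_right p m) (ZMod p)) := by
  intro y
  constructor
  · obtain ⟨z, rfl⟩ := intCast_surjective y
    rw [map_intCast, intCast_zmod_eq_zero_iff_dvd]
    rintro ⟨b, rfl⟩
    exact ⟨b, mulLeftHom_intCast p m b⟩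
  · rintro ⟨x, rfl⟩
    obtain ⟨b, rfl⟩ := intCast_surjective x
    rw [mulLeftHom_intCast, map_intCast, intCast_zmod_eq_zero_iff_dvd]
    exact dvd_mul_right _ _

end ZMod

section PiZMod

variable {ι : Type} [Fintype ι] [DecidableEq ι] [Nonempty ι]

theorem EGZ_pi_zmod_mul_le (hsub : EGZSubgroupInequality) (p m : ℕ) [NeZero p] [NeZero m] :
    EGZ (ι → ZMod (p * m)) ≤ p * (EGZ (ι → ZMod m) - 1) + EGZ (ι → ZMod p) := by
  have hcast := ZMod.castHom_surjective (dvd_mul_right p m)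
  have := EGZ_le_of_exact hsub (ψ := (ZMod.mulLeftHom p m).compLeft ι)
    (f := (ZMod.castHom (dvd_mul_right p m) (ZMod p)).toAddMonoidHom.compLeft ι)
    (ZMod.mulLeftHom_injective p m).comp_left hcast.comp_left
    (ZMod.exact_mulLeftHom_castHom p m).comp_left
    (by simp only [AddMonoid.exponent_pi_const, ZMod.exponent, mul_comm])
  simpa only [AddMonoid.exponent_pi_const, ZMod.exponent] using this

theorem EGZ_pi_zmod_mul_le_of_le (hsub : EGZSubgroupInequality) {c p m : ℕ}
    [NeZero p] [NeZero m]
    (hp : EGZ (ι → ZMod p) ≤ c * (p - 1) + 1) (hm : EGZ (ι → ZMod m) ≤ c * (m - 1) + 1) :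
    EGZ (ι → ZMod (p * m)) ≤ c * (p * m - 1) + 1 :=
  calc EGZ (ι → ZMod (p * m))
      ≤ p * (EGZ (ι → ZMod m) - 1) + EGZ (ι → ZMod p) := EGZ_pi_zmod_mul_le hsub p m
    _ ≤ p * (c * (m - 1)) + (c * (p - 1) + 1) := by gcongr; omega
    _ = c * (p * m - 1) + 1 := by
      zify [NeZero.one_le (n := p), NeZero.one_le (n := m), NeZero.one_le (n := p * m)]
      ring

theorem EGZ_pi_zmod_pow_le (hsub : EGZSubgroupInequality) {c p : ℕ} [NeZero p]
    (hp : EGZ (ι → ZMod p) ≤ c * (p - 1) + 1) (a : ℕ) :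
    EGZ (ι → ZMod (p ^ a)) ≤ c * (p ^ a - 1) + 1 := by
  induction a with
  | zero =>
    rw [pow_zero]
    exact EGZ_le_one_of_subsingleton.trans (Nat.le_add_left 1 _)
  | succ a ih =>
    rw [pow_succ']
    exact EGZ_pi_zmod_mul_le_of_le hsub hp ih

end PiZMod

theorem EGZ_three_five_general (k α β : ℕ) (hk : k = 3 ^ α * 5 ^ β)
    (h3 : EGZ (Fin 3 → ZMod 3) ≤ 3 * 2 * Nat.choose 6 3 + 1)
    (h5 : EGZ (Fin 3 → ZMod 5) ≤ 5 * 4 * Nat.choose 6 3 + 1)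
    (hsub : ∀ (G : Type) (_ : AddCommGroup G) (_ : Fintype G) (H : AddSubgroup G),
      AddMonoid.exponent G = AddMonoid.exponent H * AddMonoid.exponent (G ⧸ H) →
      EGZ G ≤ AddMonoid.exponent (G ⧸ H) * (EGZ H - 1) + EGZ (G ⧸ H)) :
    EGZ (Fin 3 → ZMod k) ≤ 300 * k - 299 := by
  have hchoose : Nat.choose 6 3 = 20 := rfl
  have h3' : EGZ (Fin 3 → ZMod 3) ≤ 300 * (3 - 1) + 1 := by omega
  have h5' : EGZ (Fin 3 → ZMod 5) ≤ 300 * (5 - 1) + 1 := by omega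
  have hk0 : 0 < k := hk ▸ by positivity
  have := EGZ_pi_zmod_mul_le_of_le hsub
    (EGZ_pi_zmod_pow_le hsub h3' α) (EGZ_pi_zmod_pow_le hsub h5' β)
  rw [← hk] at this
  omega

/-- For `k = 3^α·5^β` with `α + β ≥ 1`: assuming the bounds for `(ℤ/3ℤ)^3` and `(ℤ/5ℤ)^3`
(coming from Property D) and the subgroup inequality, `s((ℤ/kℤ)^3) ≤ 300k - 299`. -/
theorem EGZ_three_five (k α β : ℕ) (hk : k = 3 ^ α * 5 ^ β) (hαβ : 1 ≤ α + β)
    (h3 : EGZ (Fin 3 → ZMod 3) ≤ 3 * 2 * Nat.choose 6 3 + 1)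
    (h5 : EGZ (Fin 3 → ZMod 5) ≤ 5 * 4 * Nat.choose 6 3 + 1)
    (hsub : ∀ (G : Type) (_ : AddCommGroup G) (_ : Fintype G) (H : AddSubgroup G),
      AddMonoid.exponent G = AddMonoid.exponent H * AddMonoid.exponent (G ⧸ H) →
      EGZ G ≤ AddMonoid.exponent (G ⧸ H) * (EGZ H - 1) + EGZ (G ⧸ H)) :
    EGZ (Fin 3 → ZMod k) ≤ 300 * k - 299 :=
  EGZ_three_five_general k α β hk h3 h5 hsub
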